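/- Let [F̲,F̄] be a p-box, B = [b₀,b₁] with F̲(b₁) > F̄(b₀), and h continuous bounded. Then the upper conditional expectation Ē(h|B) = sup_{F∈Φ(F̲,F̄)} (∫_B h dF)/F(B) equals sup over α ∈ [F̲(b₀), F̄(b₀)], β ∈ [F̲(b₁), F̄(b₁)], α < β, of (1/(β−α)) ∫_α^β sup_{x ∈ A_γ ∩ B} h(x) dγ, where A_γ = [F̄⁻¹(γ), F̲⁻¹(γ)]. -/

import Mathlib

/-!
Every distribution function `F` of the p-box is the law of its quantile function `F⁻¹` under
Lebesgue measure on `(0, 1)`, and `F⁻¹ γ ∈ A_γ`. Hence `∫_B h dF = ∫_{F b₀}^{F b₁} h (F⁻¹ γ) dγ`,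
which is at most the integral of `sup_{A_γ ∩ B} h`. Conversely, given admissible `α < β` and
`ε > 0`, pick measurably a point `T γ ∈ A_γ`: one that is `ε`-optimal for `h` on `A_γ ∩ B` when
`α < γ < β`, the left end `F̄⁻¹ γ` of `A_γ` when `γ ≤ α`, and its right end `F̲⁻¹ γ` when `γ ≥ β`.
The law of `T` is again in the p-box, takes the values `α` and `β` at `b₀` and `b₁`, and its
conditional expectation on `B` is within `ε` of the random-set average.
-/

open Set Filter MeasureTheory ProbabilityTheory Topology

local notation "ν" => volume.restrict (Ioo (0 : ℝ) 1)

instance isProbabilityMeasure_volume_restrict_Ioo_zero_one : IsProbabilityMeasure ν := ⟨by simp⟩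

theorem AEMeasurable.ite {α β : Type*} [MeasurableSpace α] [MeasurableSpace β] {μ : Measure α}
    {p : α → Prop} [DecidablePred p] {f g : α → β}
    (hp : MeasurableSet {a | p a}) (hf : AEMeasurable f μ) (hg : AEMeasurable g μ) :
    AEMeasurable (fun a => if p a then f a else g a) μ :=
  ⟨fun a => if p a then hf.mk f a else hg.mk g a,
    Measurable.ite hp hf.measurable_mk hg.measurable_mk, by
      filter_upwards [hf.ae_eq_mk, hg.ae_eq_mk] with a hfa hga
      split_ifs
      exacts [hfa, hga]⟩

namespace StieltjesFunction

variable {F G : StieltjesFunction ℝ} {γ x : ℝ}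

def IsCDF (F : StieltjesFunction ℝ) : Prop :=
  Tendsto F atBot (𝓝 0) ∧ Tendsto F atTop (𝓝 1)

noncomputable def lowerQuantile (F : StieltjesFunction ℝ) (γ : ℝ) : ℝ := sSup {x | F x < γ}

noncomputable def upperQuantile (F : StieltjesFunction ℝ) (γ : ℝ) : ℝ := sInf {x | γ < F x}

lemma le_apply_of_forall_gt (H : ∀ z, x < z → γ ≤ F z) : γ ≤ F x :=
  ge_of_tendsto
    ((F.right_continuous x).tendsto.mono_left (nhdsWithin_mono x Ioi_subset_Ici_self))
    (eventually_nhdsWithin_of_forall H)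

namespace IsCDF

lemma nonneg (hF : F.IsCDF) (x : ℝ) : 0 ≤ F x :=
  le_of_tendsto hF.1 (eventually_atBot.2 ⟨x, fun _ hy => F.mono hy⟩)

lemma le_one (hF : F.IsCDF) (x : ℝ) : F x ≤ 1 :=
  ge_of_tendsto hF.2 (eventually_atTop.2 ⟨x, fun _ hy => F.mono hy⟩)

lemma nonempty_setOf_lt (hF : F.IsCDF) (hγ : 0 < γ) : {x | F x < γ}.Nonempty :=
  (hF.1.eventually (eventually_lt_nhds hγ)).exists

lemma nonempty_setOf_gt (hF : F.IsCDF) (hγ : γ < 1) : {x | γ < F x}.Nonempty :=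
  (hF.2.eventually (eventually_gt_nhds hγ)).exists

lemma bddAbove_setOf_lt (hF : F.IsCDF) (hγ : γ < 1) : BddAbove {x | F x < γ} :=
  let ⟨y, hy⟩ := hF.nonempty_setOf_gt hγ
  ⟨y, fun _ hx => (F.mono.reflect_lt (lt_trans hx hy)).le⟩

lemma bddBelow_setOf_gt (hF : F.IsCDF) (hγ : 0 < γ) : BddBelow {x | γ < F x} :=
  let ⟨y, hy⟩ := hF.nonempty_setOf_lt hγ
  ⟨y, fun _ hx => (F.mono.reflect_lt (lt_trans hy hx)).le⟩

theorem lowerQuantile_le_iff (hF : F.IsCDF) (hγ : γ ∈ Ioo 0 1) :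
    F.lowerQuantile γ ≤ x ↔ γ ≤ F x := by
  refine ⟨fun hq => le_apply_of_forall_gt fun z hz => not_lt.1 fun hFz => ?_, fun hx => ?_⟩
  · exact (le_csSup (hF.bddAbove_setOf_lt hγ.2) hFz).not_gt (hq.trans_lt hz)
  · exact csSup_le (hF.nonempty_setOf_lt hγ.1) fun y hy =>
      (F.mono.reflect_lt (hy.trans_le hx)).le

lemma le_apply_upperQuantile (hF : F.IsCDF) (hγ : γ ∈ Ioo 0 1) : γ ≤ F (F.upperQuantile γ) :=
  le_apply_of_forall_gt fun z hz => by
    obtain ⟨y, hy, hyz⟩ :=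
      (csInf_lt_iff (hF.bddBelow_setOf_gt hγ.1) (hF.nonempty_setOf_gt hγ.2)).1 hz
    exact hy.le.trans (F.mono hyz.le)

lemma lt_upperQuantile (hF : F.IsCDF) (hγ : γ ∈ Ioo 0 1) (hx : F x < γ) :
    x < F.upperQuantile γ :=
  not_le.1 fun h => (hx.trans_le (hF.le_apply_upperQuantile hγ)).not_ge (F.mono h)

lemma upperQuantile_le (hF : F.IsCDF) (hγ : 0 < γ) (hx : γ < F x) : F.upperQuantile γ ≤ x :=
  csInf_le (hF.bddBelow_setOf_gt hγ) hx

lemma monotoneOn_lowerQuantile (hF : F.IsCDF) : MonotoneOn F.lowerQuantile (Ioo 0 1) :=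
  fun _ h₁ _ h₂ h12 =>
    (hF.lowerQuantile_le_iff h₁).2 (h12.trans ((hF.lowerQuantile_le_iff h₂).1 le_rfl))

lemma monotoneOn_upperQuantile (hF : F.IsCDF) : MonotoneOn F.upperQuantile (Ioo 0 1) :=
  fun _ h₁ _ h₂ h12 => csInf_le_csInf (hF.bddBelow_setOf_gt h₁.1) (hF.nonempty_setOf_gt h₂.2)
    fun _ hx => h12.trans_lt hx

lemma lowerQuantile_le_lowerQuantile (hF : F.IsCDF) (hG : G.IsCDF) (hFG : ∀ x, F x ≤ G x)
    (hγ : γ ∈ Ioo 0 1) : G.lowerQuantile γ ≤ F.lowerQuantile γ :=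
  (hG.lowerQuantile_le_iff hγ).2 (((hF.lowerQuantile_le_iff hγ).1 le_rfl).trans (hFG _))

lemma lowerQuantile_le_upperQuantile (hF : F.IsCDF) (hG : G.IsCDF) (hFG : ∀ x, F x ≤ G x)
    (hγ : γ ∈ Ioo 0 1) : G.lowerQuantile γ ≤ F.upperQuantile γ :=
  le_csInf (hF.nonempty_setOf_gt hγ.2) fun x hx =>
    (hG.lowerQuantile_le_iff hγ).2 (hx.le.trans (hFG x))

lemma aemeasurable_lowerQuantile (hF : F.IsCDF) : AEMeasurable F.lowerQuantile ν :=
  aemeasurable_restrict_of_monotoneOn measurableSet_Ioo hF.monotoneOn_lowerQuantile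

lemma aemeasurable_upperQuantile (hF : F.IsCDF) : AEMeasurable F.upperQuantile ν :=
  aemeasurable_restrict_of_monotoneOn measurableSet_Ioo hF.monotoneOn_upperQuantile

end IsCDF

end StieltjesFunction

open StieltjesFunction

section PushForward

variable {T : ℝ → ℝ} {x a b : ℝ}

theorem cdf_map_mem_Icc (hT : AEMeasurable T ν) (ha : a ∈ Icc 0 1) (hb : 0 ≤ b)
    (hlow : ∀ γ ∈ Ioo 0 1, γ < a → T γ ≤ x) (hup : ∀ γ ∈ Ioo 0 1, T γ ≤ x → γ ≤ b) :
    cdf (Measure.map T ν) x ∈ Icc a b := by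
  have := Measure.isProbabilityMeasure_map hT
  rw [cdf_eq_real, map_measureReal_apply_of_aemeasurable hT measurableSet_Iic,
    measureReal_restrict_apply' measurableSet_Ioo]
  have hfin : volume (T ⁻¹' Iic x ∩ Ioo 0 1) ≠ ⊤ :=
    ((measure_mono inter_subset_right).trans_lt measure_Ioo_lt_top).ne
  constructor
  · calc a = volume.real (Ioo 0 a) :=
          ((Real.volume_real_Ioo_of_le ha.1).trans (sub_zero a)).symm
      _ ≤ _ := measureReal_mono (fun γ (hγ : γ ∈ Ioo 0 a) =>
        have hγ01 : γ ∈ Ioo 0 1 := ⟨hγ.1, hγ.2.trans_le ha.2⟩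
        show γ ∈ T ⁻¹' Iic x ∩ Ioo 0 1 from ⟨hlow γ hγ01 hγ.2, hγ01⟩) hfin
  · calc _ ≤ volume.real (Ioc 0 b) :=
          measureReal_mono (fun γ hγ => ⟨hγ.2.1, hup γ hγ.2 hγ.1⟩) measure_Ioc_lt_top.ne
      _ = b := (Real.volume_real_Ioc_of_le hb).trans (sub_zero b)

theorem cdf_map_eq (hT : AEMeasurable T ν) (ha : a ∈ Icc 0 1)
    (hx : ∀ γ ∈ Ioo 0 1, (γ < a → T γ ≤ x) ∧ (T γ ≤ x → γ ≤ a)) :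
    cdf (Measure.map T ν) x = a :=
  have h := cdf_map_mem_Icc hT ha ha.1 (fun γ hγ => (hx γ hγ).1) fun γ hγ => (hx γ hγ).2
  le_antisymm h.2 h.1

theorem StieltjesFunction.IsCDF.map_lowerQuantile {F : StieltjesFunction ℝ} (hF : F.IsCDF) :
    Measure.map F.lowerQuantile ν = F.measure := by
  have := Measure.isProbabilityMeasure_map (μ := ν) hF.aemeasurable_lowerQuantile
  rw [← measure_cdf (Measure.map F.lowerQuantile ν)]
  congr 1
  ext x
  exact cdf_map_eq hF.aemeasurable_lowerQuantile ⟨hF.nonneg x, hF.le_one x⟩ fun γ hγ =>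
    ⟨fun h => (hF.lowerQuantile_le_iff hγ).2 h.le, (hF.lowerQuantile_le_iff hγ).1⟩

theorem setIntegral_Ioc_map (hT : AEMeasurable T ν) {f : ℝ → ℝ} (hf : Continuous f)
    {a₀ a₁ x₀ x₁ : ℝ} (ha₀ : 0 ≤ a₀) (ha₁ : a₁ ≤ 1)
    (hx₀ : ∀ γ ∈ Ioo 0 1, (γ < a₀ → T γ ≤ x₀) ∧ (T γ ≤ x₀ → γ ≤ a₀))
    (hx₁ : ∀ γ ∈ Ioo 0 1, (γ < a₁ → T γ ≤ x₁) ∧ (T γ ≤ x₁ → γ ≤ a₁)) :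
    ∫ x in Ioc x₀ x₁, f x ∂(Measure.map T ν) = ∫ γ in Ioo a₀ a₁, f (T γ) := by
  rw [setIntegral_map measurableSet_Ioc hf.aestronglyMeasurable hT,
    Measure.restrict_restrict' measurableSet_Ioo]
  have hsub : T ⁻¹' Ioc x₀ x₁ ∩ Ioo 0 1 ⊆ Icc a₀ a₁ := fun γ ⟨hTγ, hγ⟩ =>
    ⟨not_lt.1 fun h => hTγ.1.not_ge ((hx₀ γ hγ).1 h), (hx₁ γ hγ).2 hTγ.2⟩
  have hsup : Ioo a₀ a₁ ⊆ T ⁻¹' Ioc x₀ x₁ ∩ Ioo 0 1 := fun γ hγ => by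
    have hγ01 : γ ∈ Ioo 0 1 := ⟨ha₀.trans_lt hγ.1, hγ.2.trans_le ha₁⟩
    exact ⟨⟨not_le.1 fun h => hγ.1.not_ge ((hx₀ γ hγ01).2 h), (hx₁ γ hγ01).1 hγ.2⟩, hγ01⟩
  exact setIntegral_congr_set
    ((hsub.eventuallyLE.trans Ioo_ae_eq_Icc.symm.le).antisymm hsup.eventuallyLE)

end PushForward

section SupOnIntervals

variable {h : ℝ → ℝ} {p q : ℝ → ℝ}

lemma abs_sSup_image_le {α : Type*} [Nonempty α] {f : α → ℝ} {C : ℝ} (hC : ∀ x, |f x| ≤ C)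
    (s : Set α) : |sSup (f '' s)| ≤ C := by
  rcases s.eq_empty_or_nonempty with rfl | hs
  · simpa using (abs_nonneg _).trans (hC (Classical.arbitrary α))
  obtain ⟨x, hx⟩ := hs
  have hle : ∀ y ∈ f '' s, y ≤ C := forall_mem_image.2 fun y _ => (le_abs_self _).trans (hC y)
  exact abs_le.2 ⟨(neg_le_of_abs_le (hC x)).trans (le_csSup ⟨C, hle⟩ (mem_image_of_mem f hx)),
    csSup_le ⟨_, mem_image_of_mem f hx⟩ hle⟩

theorem Continuous.continuous_sSup_image_segment (hh : Continuous h) :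
    Continuous fun z : ℝ × ℝ => sSup (h '' segment ℝ z.1 z.2) := by
  simp_rw [segment_eq_image', image_image, smul_eq_mul]
  exact isCompact_Icc.continuous_sSup
    (f := fun (z : ℝ × ℝ) (t : ℝ) => h (z.1 + t * (z.2 - z.1)))
    (hh.comp (by fun_prop : Continuous fun z : (ℝ × ℝ) × ℝ => z.1.1 + z.2 * (z.1.2 - z.1.1)))

theorem Continuous.measurable_sSup_image_Icc (hh : Continuous h) (hp : Measurable p)
    (hq : Measurable q) : Measurable fun γ => sSup (h '' Icc (p γ) (q γ)) := by
  have : (fun γ => sSup (h '' Icc (p γ) (q γ))) =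
      fun γ => if p γ ≤ q γ then sSup (h '' segment ℝ (p γ) (q γ)) else 0 := by
    funext γ
    split_ifs with hpq
    · rw [segment_eq_Icc hpq]
    · rw [Icc_eq_empty hpq, image_empty, Real.sSup_empty]
  rw [this]
  exact Measurable.ite (measurableSet_le hp hq)
    (hh.continuous_sSup_image_segment.measurable.comp (hp.prodMk hq)) measurable_const

theorem Continuous.nonempty_Ioo_near_sSup_image_Icc (hh : Continuous h) {a b ε : ℝ}
    (hab : a ≤ b) (hε : 0 < ε) :
    ({t | sSup (h '' Icc a b) - ε < h (a + t * (b - a))} ∩ Ioo 0 1).Nonempty := by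
  obtain ⟨x, hx, hmax⟩ := (isCompact_Icc.image hh).sSup_mem ((nonempty_Icc.2 hab).image h)
  rw [← segment_eq_Icc hab, segment_eq_image'] at hx
  obtain ⟨t, ht, rfl⟩ := hx
  rw [← closure_Ioo zero_ne_one] at ht
  refine mem_closure_iff.1 ht _ (isOpen_lt continuous_const
    (hh.comp (by fun_prop : Continuous fun t : ℝ => a + t * (b - a)))) ?_
  simp only [smul_eq_mul] at hmax
  exact hmax ▸ sub_lt_self _ hε

theorem Continuous.exists_measurable_near_sSup_image_Icc (hh : Continuous h)
    (hp : Measurable p) (hq : Measurable q) {ε : ℝ} (hε : 0 < ε) :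
    ∃ s : ℝ → ℝ, Measurable s ∧ ∀ γ, p γ ≤ q γ →
      s γ ∈ Icc (p γ) (q γ) ∧ (p γ < q γ → p γ < s γ) ∧
        sSup (h '' Icc (p γ) (q γ)) - ε < h (s γ) := by
  classical
  obtain ⟨u, hu⟩ := TopologicalSpace.exists_dense_seq ℝ
  -- searching in `Icc (p γ) (max (p γ) (q γ))` makes the search succeed for every `γ`
  set r := fun γ => max (p γ) (q γ)
  have hr : Measurable r := hp.max hq
  let P : ℕ → ℝ → Prop := fun n γ =>
    sSup (h '' Icc (p γ) (r γ)) - ε < h (p γ + u n * (r γ - p γ)) ∧ u n ∈ Ioo 0 1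
  have hP : ∀ γ, ∃ n, P n γ := fun γ =>
    hu.exists_mem_open ((isOpen_lt continuous_const (hh.comp (by fun_prop))).inter isOpen_Ioo)
      (hh.nonempty_Ioo_near_sSup_image_Icc (le_max_left _ _) hε)
  refine ⟨fun γ => p γ + u (Nat.find (hP γ)) * (r γ - p γ),
    Measurable.find (f := fun n γ => p γ + u n * (r γ - p γ)) (p := P) (fun n => by fun_prop)
      (fun n => (measurableSet_lt ((hh.measurable_sSup_image_Icc hp hr).sub measurable_const)
        (by fun_prop)).inter (MeasurableSet.const _)) hP,
    fun γ hpq => ?_⟩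
  obtain ⟨hgt, ht0, ht1⟩ := Nat.find_spec (hP γ)
  beta_reduce
  generalize u (Nat.find (hP γ)) = t at ht0 ht1 hgt ⊢
  have hrq : r γ = q γ := max_eq_right hpq
  rw [hrq] at hgt ⊢
  refine ⟨⟨?_, ?_⟩, fun hlt => ?_, hgt⟩ <;> nlinarith

lemma inv_mul_intervalIntegral_le_of_abs_le {f : ℝ → ℝ} {C α β : ℝ} (hf : ∀ x, |f x| ≤ C)
    (hαβ : α < β) :
    (β - α)⁻¹ * ∫ γ in α..β, f γ ≤ C := by
  rw [inv_mul_le_iff₀ (sub_pos.2 hαβ)]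
  have hnorm : ‖∫ γ in α..β, f γ‖ ≤ C * |β - α| :=
    intervalIntegral.norm_integral_le_of_norm_le_const fun γ _ => hf γ
  calc ∫ γ in α..β, f γ ≤ C * |β - α| := (le_abs_self _).trans hnorm
    _ = (β - α) * C := by rw [abs_of_pos (sub_pos.2 hαβ), mul_comm]

end SupOnIntervals

section PBox

variable {Fl Fu : StieltjesFunction ℝ} {h : ℝ → ℝ} {C b₀ b₁ α β : ℝ}

def pbox (Fl Fu : StieltjesFunction ℝ) : Set (StieltjesFunction ℝ) :=
  {F | F.IsCDF ∧ ∀ x, Fl x ≤ F x ∧ F x ≤ Fu x}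

def randomSet (Fl Fu : StieltjesFunction ℝ) (γ : ℝ) : Set ℝ :=
  Icc (Fu.lowerQuantile γ) (Fl.upperQuantile γ)

theorem cdf_map_mem_pbox (hFl : Fl.IsCDF) (hFu : Fu.IsCDF)
    (hle : ∀ x, Fl x ≤ Fu x) {T : ℝ → ℝ} (hT : AEMeasurable T ν)
    (hA : ∀ γ ∈ Ioo 0 1, T γ ∈ randomSet Fl Fu γ) : cdf (Measure.map T ν) ∈ pbox Fl Fu :=
  ⟨⟨tendsto_cdf_atBot _, tendsto_cdf_atTop _⟩, fun x =>
    cdf_map_mem_Icc hT ⟨hFl.nonneg x, hFl.le_one x⟩ ((hFl.nonneg x).trans (hle x))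
      (fun γ hγ hγx => (hA γ hγ).2.trans (hFl.upperQuantile_le hγ.1 hγx))
      fun γ hγ hTx => (hFu.lowerQuantile_le_iff hγ).1 ((hA γ hγ).1.trans hTx)⟩


theorem exists_monotone_randomSet_inter_Icc (hFl : Fl.IsCDF) (hFu : Fu.IsCDF)
    (hle : ∀ x, Fl x ≤ Fu x) (hb : b₀ < b₁) (hα : Fl b₀ ≤ α) (hβ : β ≤ Fu b₁) :
    ∃ p q : ℝ → ℝ, Monotone p ∧ Monotone q ∧ ∀ γ ∈ Ioo α β,
      randomSet Fl Fu γ ∩ Icc b₀ b₁ = Icc (p γ) (q γ) ∧ b₀ ≤ p γ ∧ p γ ≤ q γ ∧ b₀ < q γ := by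
  have hsub : Ioo α β ⊆ Ioo 0 1 :=
    Ioo_subset_Ioo ((hFl.nonneg b₀).trans hα) (hβ.trans (hFu.le_one b₁))
  have hp : ∀ γ ∈ Ioo α β, Fu.lowerQuantile γ ⊔ b₀ ≤ b₁ := fun γ hγ =>
    sup_le ((hFu.lowerQuantile_le_iff (hsub hγ)).2 (hγ.2.le.trans hβ)) hb.le
  have hq : ∀ γ ∈ Ioo α β, b₀ < Fl.upperQuantile γ ⊓ b₁ := fun γ hγ =>
    lt_inf_iff.2 ⟨hFl.lt_upperQuantile (hsub hγ) (hα.trans_lt hγ.1), hb⟩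
  obtain ⟨p, hpm, hpeq⟩ := MonotoneOn.exists_monotone_extension
    (f := fun γ => Fu.lowerQuantile γ ⊔ b₀) (s := Ioo α β)
    (fun _ h₁ _ h₂ h₁₂ =>
      sup_le_sup_right (hFu.monotoneOn_lowerQuantile (hsub h₁) (hsub h₂) h₁₂) _)
    ⟨b₀, forall_mem_image.2 fun _ _ => le_sup_right⟩ ⟨b₁, forall_mem_image.2 hp⟩
  obtain ⟨q, hqm, hqeq⟩ := MonotoneOn.exists_monotone_extension
    (f := fun γ => Fl.upperQuantile γ ⊓ b₁) (s := Ioo α β)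
    (fun _ h₁ _ h₂ h₁₂ =>
      inf_le_inf_right _ (hFl.monotoneOn_upperQuantile (hsub h₁) (hsub h₂) h₁₂))
    ⟨b₀, forall_mem_image.2 fun γ hγ => (hq γ hγ).le⟩
    ⟨b₁, forall_mem_image.2 fun _ _ => inf_le_right⟩
  refine ⟨p, q, hpm, hqm, fun γ hγ => ?_⟩
  rw [← hpeq hγ, ← hqeq hγ]
  have hQ := IsCDF.lowerQuantile_le_upperQuantile hFl hFu hle (hsub hγ)
  exact ⟨Icc_inter_Icc, le_sup_right,
    sup_le (le_inf hQ (le_sup_left.trans (hp γ hγ))) (hq γ hγ).le, hq γ hγ⟩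

theorem integrableOn_sSup_randomSet (hFl : Fl.IsCDF) (hFu : Fu.IsCDF)
    (hle : ∀ x, Fl x ≤ Fu x) (hh : Continuous h) (hbd : ∀ x, |h x| ≤ C) (hb : b₀ < b₁)
    (hα : Fl b₀ ≤ α) (hβ : β ≤ Fu b₁) :
    IntegrableOn (fun γ => sSup (h '' (randomSet Fl Fu γ ∩ Icc b₀ b₁))) (Ioo α β) := by
  obtain ⟨p, q, hp, hq, hpq⟩ := exists_monotone_randomSet_inter_Icc hFl hFu hle hb hα hβ
  refine (integrableOn_const measure_Ioo_lt_top.ne).mono' ?_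
    (ae_of_all _ fun γ => abs_sSup_image_le hbd _)
  refine (hh.measurable_sSup_image_Icc hp.measurable hq.measurable).aestronglyMeasurable.congr ?_
  filter_upwards [ae_restrict_mem measurableSet_Ioo] with γ hγ
  rw [(hpq γ hγ).1]

theorem exists_measurable_near_sSup_randomSet (hFl : Fl.IsCDF) (hFu : Fu.IsCDF)
    (hle : ∀ x, Fl x ≤ Fu x) (hh : Continuous h) (hb : b₀ < b₁) (hα : Fl b₀ ≤ α)
    (hβ : β ≤ Fu b₁) {ε : ℝ} (hε : 0 < ε) :
    ∃ s : ℝ → ℝ, Measurable s ∧ ∀ γ ∈ Ioo α β,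
      s γ ∈ randomSet Fl Fu γ ∩ Icc b₀ b₁ ∧ b₀ < s γ ∧
        sSup (h '' (randomSet Fl Fu γ ∩ Icc b₀ b₁)) - ε < h (s γ) := by
  obtain ⟨p, q, hp, hq, hpq⟩ := exists_monotone_randomSet_inter_Icc hFl hFu hle hb hα hβ
  obtain ⟨s, hs, hsel⟩ := hh.exists_measurable_near_sSup_image_Icc hp.measurable hq.measurable hε
  refine ⟨s, hs, fun γ hγ => ?_⟩
  obtain ⟨hA, hb₀p, hpq', hb₀q⟩ := hpq γ hγ
  obtain ⟨hmem, hlt, hgt⟩ := hsel γ hpq'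
  rw [hA]
  refine ⟨hmem, ?_, hgt⟩
  rcases hb₀p.lt_or_eq with hb₀p | hb₀p
  · exact hb₀p.trans_le hmem.1
  · rw [hb₀p] at hb₀q ⊢
    exact hlt hb₀q

theorem exists_selection_randomSet (hFl : Fl.IsCDF) (hFu : Fu.IsCDF)
    (hle : ∀ x, Fl x ≤ Fu x) (hh : Continuous h) (hpos : Fu b₀ < Fl b₁)
    (hα : α ∈ Icc (Fl b₀) (Fu b₀)) (hβ : β ∈ Icc (Fl b₁) (Fu b₁)) (hαβ : α < β) {ε : ℝ}
    (hε : 0 < ε) :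
    ∃ T : ℝ → ℝ, AEMeasurable T ν ∧ (∀ γ ∈ Ioo 0 1, T γ ∈ randomSet Fl Fu γ) ∧
      (∀ γ ∈ Ioo 0 1, (γ < α → T γ ≤ b₀) ∧ (T γ ≤ b₀ → γ ≤ α)) ∧
      (∀ γ ∈ Ioo 0 1, (γ < β → T γ ≤ b₁) ∧ (T γ ≤ b₁ → γ ≤ β)) ∧
      ∀ γ ∈ Ioo α β, sSup (h '' (randomSet Fl Fu γ ∩ Icc b₀ b₁)) - ε < h (T γ) := by
  have hb : b₀ < b₁ := Fu.mono.reflect_lt (hpos.trans_le (hle b₁))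
  obtain ⟨s, hs, hsel⟩ := exists_measurable_near_sSup_randomSet hFl hFu hle hh hb hα.1 hβ.2 hε
  classical
  -- chosen so that, within `(0, 1)`, `{T ≤ b₀} = (0, α]` and `(0, β) ⊆ {T ≤ b₁} ⊆ (0, β]`
  set T := fun γ =>
    if γ ≤ α then Fu.lowerQuantile γ else if γ < β then s γ else Fl.upperQuantile γ
  have key : ∀ γ ∈ Ioo 0 1, T γ ∈ randomSet Fl Fu γ ∧
      ((γ < α → T γ ≤ b₀) ∧ (T γ ≤ b₀ → γ ≤ α)) ∧
      ((γ < β → T γ ≤ b₁) ∧ (T γ ≤ b₁ → γ ≤ β)) := by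
    intro γ hγ
    have hQ := IsCDF.lowerQuantile_le_upperQuantile hFl hFu hle hγ
    by_cases h₁ : γ ≤ α
    · have hT : Fu.lowerQuantile γ ≤ b₀ := (hFu.lowerQuantile_le_iff hγ).2 (h₁.trans hα.2)
      simp only [T, if_pos h₁]
      exact ⟨⟨le_rfl, hQ⟩, ⟨fun _ => hT, fun _ => h₁⟩, fun _ => hT.trans hb.le,
        fun _ => h₁.trans hαβ.le⟩
    by_cases h₂ : γ < β
    · obtain ⟨hmem, hs₀, -⟩ := hsel γ ⟨not_le.1 h₁, h₂⟩
      simp only [T, if_neg h₁, if_pos h₂]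
      exact ⟨hmem.1, ⟨fun h => (h₁ h.le).elim, fun h => (hs₀.not_ge h).elim⟩,
        fun _ => hmem.2.2, fun _ => h₂.le⟩
    · have hb₀ := hFl.lt_upperQuantile hγ (hα.1.trans_lt (not_le.1 h₁))
      simp only [T, if_neg h₁, if_neg h₂]
      exact ⟨⟨hQ, le_rfl⟩, ⟨fun h => (h₁ h.le).elim, fun h => (hb₀.not_ge h).elim⟩,
        fun h => (h₂ h).elim,
        fun h => not_lt.1 fun hβγ => (hFl.lt_upperQuantile hγ (hβ.1.trans_lt hβγ)).not_ge h⟩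
  refine ⟨T, hFu.aemeasurable_lowerQuantile.ite measurableSet_Iic
    (hs.aemeasurable.ite measurableSet_Iio hFl.aemeasurable_upperQuantile),
    fun γ hγ => (key γ hγ).1, fun γ hγ => (key γ hγ).2.1, fun γ hγ => (key γ hγ).2.2,
    fun γ hγ => ?_⟩
  simp only [T, if_neg (not_le.2 hγ.1), if_pos hγ.2]
  exact (hsel γ hγ).2.2

theorem div_le_inv_mul_integral_sSup_randomSet (hFl : Fl.IsCDF) (hFu : Fu.IsCDF)
    (hh : Continuous h) (hbd : ∀ x, |h x| ≤ C) (hpos : Fu b₀ < Fl b₁)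
    {F : StieltjesFunction ℝ} (hF : F ∈ pbox Fl Fu) :
    (∫ x in Ioc b₀ b₁, h x ∂F.measure) / (F b₁ - F b₀) ≤
      (F b₁ - F b₀)⁻¹ * ∫ γ in F b₀..F b₁, sSup (h '' (randomSet Fl Fu γ ∩ Icc b₀ b₁)) := by
  have hle : ∀ x, Fl x ≤ Fu x := fun x => (hF.2 x).1.trans (hF.2 x).2
  have hb : b₀ < b₁ := Fu.mono.reflect_lt (hpos.trans_le (hle b₁))
  have hsub : Ioo (F b₀) (F b₁) ⊆ Ioo 0 1 := Ioo_subset_Ioo (hF.1.nonneg _) (hF.1.le_one _)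
  have hQ : AEMeasurable F.lowerQuantile ν := hF.1.aemeasurable_lowerQuantile
  have hlevel : ∀ x, ∀ γ ∈ Ioo 0 1, (γ < F x → F.lowerQuantile γ ≤ x) ∧
      (F.lowerQuantile γ ≤ x → γ ≤ F x) := fun x γ hγ =>
    ⟨fun h => (hF.1.lowerQuantile_le_iff hγ).2 h.le, (hF.1.lowerQuantile_le_iff hγ).1⟩
  rw [div_eq_inv_mul, ← hF.1.map_lowerQuantile,
    setIntegral_Ioc_map hQ hh (hF.1.nonneg _) (hF.1.le_one _) (hlevel b₀) (hlevel b₁),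
    intervalIntegral.integral_of_le (F.mono hb.le), integral_Ioc_eq_integral_Ioo]
  refine mul_le_mul_of_nonneg_left (setIntegral_mono_on ?_
    (integrableOn_sSup_randomSet hFl hFu hle hh hbd hb (hF.2 b₀).1 (hF.2 b₁).2)
    measurableSet_Ioo fun γ hγ => ?_) (inv_nonneg.2 (sub_nonneg.2 (F.mono hb.le)))
  · exact (integrableOn_const measure_Ioo_lt_top.ne).mono'
      ((hh.measurable.comp_aemeasurable (hQ.mono_measure (Measure.restrict_mono hsub le_rfl)))
        |>.aestronglyMeasurable) (ae_of_all _ fun γ => hbd _)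
  · have hγ01 := hsub hγ
    refine le_csSup ⟨C, forall_mem_image.2 fun y _ => (le_abs_self _).trans (hbd y)⟩
      (mem_image_of_mem h ⟨⟨?_, ?_⟩, ?_, ?_⟩)
    · exact IsCDF.lowerQuantile_le_lowerQuantile hF.1 hFu (fun x => (hF.2 x).2) hγ01
    · exact IsCDF.lowerQuantile_le_upperQuantile hFl hF.1 (fun x => (hF.2 x).1) hγ01
    · exact not_lt.1 fun h => hγ.1.not_ge ((hF.1.lowerQuantile_le_iff hγ01).1 h.le)
    · exact (hF.1.lowerQuantile_le_iff hγ01).2 hγ.2.le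

theorem exists_mem_pbox_inv_mul_integral_sSup_randomSet_le (hFl : Fl.IsCDF) (hFu : Fu.IsCDF)
    (hle : ∀ x, Fl x ≤ Fu x) (hh : Continuous h) (hbd : ∀ x, |h x| ≤ C) (hpos : Fu b₀ < Fl b₁)
    (hα : α ∈ Icc (Fl b₀) (Fu b₀)) (hβ : β ∈ Icc (Fl b₁) (Fu b₁)) (hαβ : α < β) {ε : ℝ}
    (hε : 0 < ε) :
    ∃ F ∈ pbox Fl Fu, (β - α)⁻¹ * ∫ γ in α..β, sSup (h '' (randomSet Fl Fu γ ∩ Icc b₀ b₁)) ≤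
        (∫ x in Ioc b₀ b₁, h x ∂F.measure) / (F b₁ - F b₀) + ε := by
  obtain ⟨T, hT, hA, hb₀, hb₁, hTgt⟩ :=
    exists_selection_randomSet hFl hFu hle hh hpos hα hβ hαβ hε
  have hb : b₀ < b₁ := Fu.mono.reflect_lt (hpos.trans_le (hle b₁))
  have hα0 : 0 ≤ α := (hFl.nonneg b₀).trans hα.1
  have hβ1 : β ≤ 1 := hβ.2.trans (hFu.le_one b₁)
  have hFb₀ := cdf_map_eq hT ⟨hα0, hαβ.le.trans hβ1⟩ hb₀
  have hFb₁ := cdf_map_eq hT ⟨hα0.trans hαβ.le, hβ1⟩ hb₁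
  have := Measure.isProbabilityMeasure_map hT
  refine ⟨cdf (Measure.map T ν), cdf_map_mem_pbox hFl hFu hle hT hA, ?_⟩
  have hTint : IntegrableOn (fun γ => h (T γ)) (Ioo α β) :=
    (integrableOn_const measure_Ioo_lt_top.ne).mono'
      ((hh.measurable.comp_aemeasurable (hT.mono_measure (Measure.restrict_mono
        (Ioo_subset_Ioo hα0 hβ1) le_rfl))).aestronglyMeasurable) (ae_of_all _ fun γ => hbd _)
  have hint : ∫ γ in α..β, sSup (h '' (randomSet Fl Fu γ ∩ Icc b₀ b₁)) ≤
      ∫ x in Ioc b₀ b₁, h x ∂(cdf (Measure.map T ν)).measure + (β - α) * ε := by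
    rw [measure_cdf, setIntegral_Ioc_map hT hh hα0 hβ1 hb₀ hb₁,
      intervalIntegral.integral_of_le hαβ.le, integral_Ioc_eq_integral_Ioo,
      ← Real.volume_real_Ioo_of_le hαβ.le, ← smul_eq_mul, ← setIntegral_const,
      ← integral_add hTint (integrableOn_const measure_Ioo_lt_top.ne)]
    exact setIntegral_mono_on (integrableOn_sSup_randomSet hFl hFu hle hh hbd hb hα.1 hβ.2)
      (hTint.add (integrableOn_const measure_Ioo_lt_top.ne)) measurableSet_Ioo
      fun γ hγ => by linarith [hTgt γ hγ]
  rw [hFb₀, hFb₁, inv_mul_le_iff₀ (sub_pos.2 hαβ), mul_add,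
    mul_div_cancel₀ _ (sub_pos.2 hαβ).ne']
  linarith

end PBox

theorem upper_conditional_expectation_random_set_general
    (Fl Fu : StieltjesFunction ℝ)
    (hFl : Tendsto Fl atBot (nhds 0) ∧ Tendsto Fl atTop (nhds 1))
    (hFu : Tendsto Fu atBot (nhds 0) ∧ Tendsto Fu atTop (nhds 1))
    (hle : ∀ x, Fl x ≤ Fu x)
    (b₀ b₁ : ℝ) (hpos : Fu b₀ < Fl b₁)
    (h : ℝ → ℝ) (hcont : Continuous h) (C : ℝ) (hbd : ∀ x, |h x| ≤ C)
    (Φ : Set (StieltjesFunction ℝ))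
    (hΦ : Φ = {F : StieltjesFunction ℝ |
        (Tendsto F atBot (nhds 0) ∧ Tendsto F atTop (nhds 1)) ∧
          ∀ x, Fl x ≤ F x ∧ F x ≤ Fu x}) :
    sSup ((fun F : StieltjesFunction ℝ =>
        (∫ x in Ioc b₀ b₁, h x ∂F.measure) / (F b₁ - F b₀)) '' Φ)
      = sSup {v : ℝ | ∃ α β : ℝ,
          α ∈ Icc (Fl b₀) (Fu b₀) ∧ β ∈ Icc (Fl b₁) (Fu b₁) ∧ α < β ∧
          v = (β - α)⁻¹ *
            ∫ γ in α..β,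
              sSup (h '' (Icc (sSup {x : ℝ | Fu x < γ})
                (sInf {x : ℝ | Fl x > γ}) ∩ Icc b₀ b₁))} := by
  change Φ = pbox Fl Fu at hΦ
  subst hΦ
  have hlt : ∀ F ∈ pbox Fl Fu, F b₀ < F b₁ := fun F hF =>
    ((hF.2 b₀).2.trans_lt hpos).trans_le (hF.2 b₁).1
  have hK := fun F hF => div_le_inv_mul_integral_sSup_randomSet hFl hFu hcont hbd hpos (F := F) hF
  have hbound := fun α β (hαβ : α < β) => inv_mul_intervalIntegral_le_of_abs_le
    (f := fun γ => sSup (h '' (randomSet Fl Fu γ ∩ Icc b₀ b₁)))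
    (fun γ => abs_sSup_image_le hbd _) hαβ
  apply le_antisymm
  · have hFl_mem : Fl ∈ pbox Fl Fu := ⟨hFl, fun x => ⟨le_rfl, hle x⟩⟩
    refine csSup_le ⟨_, Fl, hFl_mem, rfl⟩ ?_
    rintro _ ⟨F, hF, rfl⟩
    refine (hK F hF).trans (le_csSup ⟨C, ?_⟩ ⟨F b₀, F b₁, hF.2 b₀, hF.2 b₁, hlt F hF, rfl⟩)
    rintro _ ⟨α, β, -, -, hαβ, rfl⟩
    exact hbound α β hαβ
  · refine csSup_le ⟨_, Fu b₀, Fl b₁, ⟨hle _, le_rfl⟩, ⟨le_rfl, hle _⟩, hpos, rfl⟩ ?_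
    rintro _ ⟨α, β, hα, hβ, hαβ, rfl⟩
    refine le_of_forall_pos_le_add fun ε hε => ?_
    obtain ⟨F, hF, hFε⟩ :=
      exists_mem_pbox_inv_mul_integral_sSup_randomSet_le hFl hFu hle hcont hbd hpos hα hβ hαβ hε
    refine hFε.trans (add_le_add_left ?_ ε)
    refine le_csSup ⟨C, ?_⟩ ⟨F, hF, rfl⟩
    rintro _ ⟨G, hG, rfl⟩
    exact (hK G hG).trans (hbound _ _ (hlt G hG))

/-- Random-set formula for the upper conditional expectation
given `B = [b₀,b₁]`: it is the supremum over admissible endpoint values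
`α, β` of `(β−α)⁻¹ ∫_α^β sup_{x ∈ A_γ ∩ B} h(x) dγ`. -/
theorem upper_conditional_expectation_random_set
    (Fl Fu : StieltjesFunction ℝ)
    (hFl : Tendsto Fl atBot (nhds 0) ∧ Tendsto Fl atTop (nhds 1))
    (hFu : Tendsto Fu atBot (nhds 0) ∧ Tendsto Fu atTop (nhds 1))
    (hle : ∀ x, Fl x ≤ Fu x)
    (b₀ b₁ : ℝ) (hb : b₀ ≤ b₁) (hpos : Fu b₀ < Fl b₁)
    (h : ℝ → ℝ) (hcont : Continuous h) (C : ℝ) (hbd : ∀ x, |h x| ≤ C)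
    (Φ : Set (StieltjesFunction ℝ))
    (hΦ : Φ = {F : StieltjesFunction ℝ |
        (Tendsto F atBot (nhds 0) ∧ Tendsto F atTop (nhds 1)) ∧
          ∀ x, Fl x ≤ F x ∧ F x ≤ Fu x}) :
    sSup ((fun F : StieltjesFunction ℝ =>
        (∫ x in Ioc b₀ b₁, h x ∂F.measure) / (F b₁ - F b₀)) '' Φ)
      = sSup {v : ℝ | ∃ α β : ℝ,
          α ∈ Icc (Fl b₀) (Fu b₀) ∧ β ∈ Icc (Fl b₁) (Fu b₁) ∧ α < β ∧
          v = (β - α)⁻¹ *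
            ∫ γ in α..β,
              sSup (h '' (Icc (sSup {x : ℝ | Fu x < γ})
                (sInf {x : ℝ | Fl x > γ}) ∩ Icc b₀ b₁))} :=
  upper_conditional_expectation_random_set_general Fl Fu hFl hFu hle b₀ b₁ hpos h hcont C hbd Φ hΦ
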